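/- arXiv:2409.07583 — 2 statements merged into one kernel-verified Lean document; each statement's English description precedes it below -/
import Mathlib

section
/- Let I ⊆ k[x_1,…,x_n] be a monomial ideal. If ū e_i is a monomial cycle in Koszul homological degree 1 (i.e. x_i u ∈ I, u ∉ I), then [ū e_i] = 0 in H_1(K^{S/I}) if and only if u ∈ I + (x_j : j ≠ i)·(I : x_i). -/
/-!
Lift a 2-chain `w` with `∂w = ū e_i` to `W` over `S` and let `L_v` be the `e_v`-coefficient of
`∂W`, so that `L_v ∈ I` for `v ≠ i` and `L_i ≡ u` modulo `I`. Since `∂∂ = 0`, `∑ x_v L_v = 0`.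
As `u ∉ I` and `I` is monomial, `L_i` has coefficient `1` at `u`, so comparing coefficients of
`x_i u` in the syzygy gives some `v ≠ i` with `x_v ∣ u` and `x_i u / x_v` occurring in `L_v ∈ I`.
Conversely, if `u = x_j g` with `x_i g ∈ I`, then `±ḡ e_{ij}` bounds `ū e_i`. For a monomial
`u ∉ I`, "`u = x_j g` with `j ≠ i` and `x_i g ∈ I`" is exactly membership in
`I + (x_j : j ≠ i)·(I : x_i)`, because that ideal is spanned by monomials.
-/

open MvPolynomial

/-- The Koszul sign `sgn(τ, j) = (-1)^{#{s ∈ τ : s < j}}`. -/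
def koszulSgn {n : ℕ} (τ : Finset (Fin n)) (j : Fin n) : ℤ :=
  (-1) ^ ((τ.filter fun s => s < j).card)

/-- The Koszul differential on chains, represented as functions
`Finset (Fin n) → R` (the value at `σ` is the coefficient of `e_σ`):
`(∂w)(σ) = Σ_{j ∉ σ} sgn(σ ∪ {j}, j) · x_j · w(σ ∪ {j})`. -/
noncomputable def koszulBd {n : ℕ} {R : Type*} [CommRing R] (x : Fin n → R)
    (w : Finset (Fin n) → R) (σ : Finset (Fin n)) : R :=
  ∑ j ∈ σᶜ, koszulSgn (insert j σ) j • (x j * w (insert j σ))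

/-- `I` is a monomial ideal: generated by a set of monomials. -/
def IsMonomialIdeal {k : Type*} [Field k] {n : ℕ}
    (I : Ideal (MvPolynomial (Fin n) k)) : Prop :=
  ∃ G : Set (Fin n →₀ ℕ),
    I = Ideal.span ((fun d => (monomial d (1 : k) : MvPolynomial (Fin n) k)) '' G)

section Koszul

variable {n : ℕ}

lemma koszulSgn_singleton (j : Fin n) : koszulSgn {j} j = 1 := by
  simp [koszulSgn, Finset.filter_singleton]

lemma koszulSgn_mul_self (τ : Finset (Fin n)) (j : Fin n) :
    koszulSgn τ j * koszulSgn τ j = 1 := by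
  rw [koszulSgn, ← pow_add, Even.neg_one_pow ⟨_, rfl⟩]

lemma koszulSgn_pair_add {a b : Fin n} (h : a ≠ b) :
    koszulSgn {a, b} a + koszulSgn {a, b} b = 0 := by
  rcases h.lt_or_gt with hab | hab <;>
    simp [koszulSgn, Finset.filter_insert, Finset.filter_singleton, hab, hab.not_gt]

variable {R : Type*} [CommRing R] (x : Fin n → R) (w : Finset (Fin n) → R)

lemma map_koszulBd {R' : Type*} [CommRing R'] (f : R →+* R') (σ : Finset (Fin n)) :
    f (koszulBd x w σ) = koszulBd (fun j => f (x j)) (fun τ => f (w τ)) σ := by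
  simp [koszulBd, map_sum, map_mul]

lemma koszulBd_empty : koszulBd x w ∅ = ∑ j, x j * w {j} := by
  simp [koszulBd, koszulSgn_singleton]

lemma koszulBd_koszulBd_empty : koszulBd x (koszulBd x w) ∅ = 0 := by
  classical
  set f : Fin n × Fin n → R := fun p =>
    x p.1 * (koszulSgn {p.2, p.1} p.2 • (x p.2 * w {p.2, p.1})) with hf
  have hswap : ∀ p : Fin n × Fin n, p.1 ≠ p.2 → f p + f p.swap = 0 := by
    rintro ⟨a, b⟩ hab
    calc f (a, b) + f (b, a)
        = (koszulSgn {a, b} a + koszulSgn {a, b} b) • (x a * x b * w {a, b}) := by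
          simp only [hf, Finset.pair_comm b a, add_smul, mul_smul_comm]; ring_nf
      _ = 0 := by rw [koszulSgn_pair_add hab, zero_smul]
  calc koszulBd x (koszulBd x w) ∅ = ∑ p ∈ Finset.univ.offDiag, f p := by
        rw [Finset.sum_finset_product _ Finset.univ (fun j => {j}ᶜ) (by simp [eq_comm]),
          koszulBd_empty]
        simp only [koszulBd, Finset.mul_sum, hf]
    _ = 0 := Finset.sum_involution (fun p _ => p.swap)
        (fun p hp => hswap p (Finset.mem_offDiag.1 hp).2.2)
        (fun p hp _ h => (Finset.mem_offDiag.1 hp).2.2 (congrArg Prod.snd h))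
        (fun p hp => by simpa [and_comm, eq_comm] using hp)
        (fun p _ => p.swap_swap)

lemma exists_koszulBd_eq_of_mul_eq_zero {i j : Fin n} (hij : i ≠ j) {c : R} (hc : x i * c = 0) :
    ∃ w : Finset (Fin n) → R, koszulBd x w = fun τ => if τ = {i} then x j * c else 0 := by
  classical
  set s := koszulSgn {j, i} j
  refine ⟨fun τ => if τ = {j, i} then s • c else 0, funext fun σ => ?_⟩
  have hterm : ∀ l ∉ σ,
      koszulSgn (insert l σ) l • (x l * if insert l σ = {j, i} then s • c else 0)
        = if l = j then (if σ = {i} then x j * c else 0) else 0 := by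
    intro l hl
    by_cases hpair : insert l σ = {j, i}
    · have hl' : l ∈ ({j, i} : Finset (Fin n)) := hpair ▸ Finset.mem_insert_self l σ
      rcases Finset.mem_insert.1 hl' with rfl | hli
      · have hσ : σ = {i} := by
          rw [← Finset.erase_insert hl, hpair, Finset.erase_insert (by simpa using hij.symm)]
        rw [hpair, if_pos rfl, if_pos rfl, if_pos hσ, mul_smul_comm, smul_smul,
          koszulSgn_mul_self, one_smul]
      · obtain rfl := Finset.mem_singleton.1 hli
        rw [if_pos hpair, if_neg hij, mul_smul_comm, hc, smul_zero, smul_zero]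
    · rw [if_neg hpair, mul_zero, smul_zero]
      split_ifs with hlj hσ
      · exact absurd (by rw [hσ, hlj]) hpair
      all_goals rfl
  simp only [koszulBd, Finset.sum_congr rfl fun l hl => hterm l (Finset.mem_compl.1 hl),
    Finset.sum_ite_eq', Finset.mem_compl]
  by_cases hσ : σ = {i}
  · simp [hσ, hij.symm]
  · simp [hσ]

end Koszul

section MonomialIdeal

variable {k : Type*} [Field k] {n : ℕ} {I : Ideal (MvPolynomial (Fin n) k)}

lemma IsMonomialIdeal.monomial_mem_of_mem (hI : IsMonomialIdeal I) {f : MvPolynomial (Fin n) k}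
    (hf : f ∈ I) {t : Fin n →₀ ℕ} (ht : t ∈ f.support) : monomial t (1 : k) ∈ I := by
  obtain ⟨G, rfl⟩ := hI
  obtain ⟨s, hs, hst⟩ := mem_ideal_span_monomial_image.1 hf t ht
  exact Ideal.mem_of_dvd _ (monomial_one_dvd_monomial_one.2 hst) (Ideal.subset_span ⟨s, hs, rfl⟩)

lemma IsMonomialIdeal.colon_span_X_le (hI : IsMonomialIdeal I) (i : Fin n) :
    Submodule.colon I (Ideal.span {(X i : MvPolynomial (Fin n) k)})
      ≤ Ideal.span ((fun s => monomial s (1 : k)) '' {s | X i * monomial s 1 ∈ I}) := by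
  intro g hg
  refine mem_ideal_span_monomial_image.2 fun t ht => ⟨t, ?_, le_rfl⟩
  have hmem := hI.monomial_mem_of_mem (Ideal.mem_colon_span_singleton.1 hg)
    (t := t + Finsupp.single i 1) (by rwa [mem_support_iff, coeff_mul_X, ← mem_support_iff])
  rwa [Set.mem_ofPred_eq, X, monomial_mul, one_mul, add_comm]

lemma IsMonomialIdeal.exists_eq_X_mul_of_mem_sup_span_X_mul_colon (hI : IsMonomialIdeal I)
    {d : Fin n →₀ ℕ} (hnz : monomial d (1 : k) ∉ I) {i : Fin n}
    (h : monomial d (1 : k) ∈ I + Ideal.span {f | ∃ j : Fin n, j ≠ i ∧ f = X j} *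
      Submodule.colon I (Ideal.span {(X i : MvPolynomial (Fin n) k)})) :
    ∃ j ≠ i, ∃ g, monomial d (1 : k) = X j * g ∧ X i * g ∈ I := by
  classical
  obtain ⟨a, ha, b, hb, hab⟩ := Submodule.mem_sup.1 h
  have hd : d ∈ b.support := by
    have hca : coeff d a = 0 := by
      by_contra hca
      exact hnz (hI.monomial_mem_of_mem ha (mem_support_iff.2 hca))
    have hcab := congrArg (coeff d) hab
    rw [coeff_add, hca, zero_add, coeff_monomial, if_pos rfl] at hcab
    simp [hcab]
  have hb' : b ∈ Ideal.span ((fun t => monomial t (1 : k)) ''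
      {t | ∃ j ≠ i, ∃ s, t = Finsupp.single j 1 + s ∧ X i * monomial s 1 ∈ I}) := by
    refine (Ideal.mul_mono_right (hI.colon_span_X_le i)).trans ?_ hb
    rw [Ideal.span_mul_span']
    refine Ideal.span_mono ?_
    rintro _ ⟨_, ⟨j, hj, rfl⟩, _, ⟨s, hs, rfl⟩, rfl⟩
    exact ⟨_, ⟨j, hj, s, rfl, hs⟩, by simp only [X, monomial_mul, one_mul]⟩
  obtain ⟨_, ⟨j, hj, s, rfl, hs⟩, hle⟩ := mem_ideal_span_monomial_image.1 hb' d hd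
  obtain ⟨r, rfl⟩ := le_iff_exists_add.1 hle
  refine ⟨j, hj, monomial (s + r) 1, by simp only [X, monomial_mul, one_mul, add_assoc], ?_⟩
  rw [← one_mul (1 : k), ← monomial_mul, ← mul_assoc]
  exact Ideal.mul_mem_right _ _ hs

lemma IsMonomialIdeal.exists_eq_X_mul_of_sum_X_mul_eq_zero (hI : IsMonomialIdeal I)
    {d : Fin n →₀ ℕ} (hnz : monomial d (1 : k) ∉ I) {i : Fin n} {L : Fin n → MvPolynomial (Fin n) k}
    (hL : ∑ v, X v * L v = 0) (hLi : L i - monomial d 1 ∈ I) (hLv : ∀ v ≠ i, L v ∈ I) :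
    ∃ j ≠ i, ∃ g, monomial d (1 : k) = X j * g ∧ X i * g ∈ I := by
  classical
  have hLi_coeff : coeff d (L i) = 1 := by
    have hzero : coeff d (L i - monomial d 1) = 0 := by
      by_contra h
      exact hnz (hI.monomial_mem_of_mem hLi (mem_support_iff.2 h))
    rwa [coeff_sub, coeff_monomial, if_pos rfl, sub_eq_zero] at hzero
  have hrest : ∑ v ∈ Finset.univ.erase i, coeff (Finsupp.single i 1 + d) (X v * L v) = -1 := by
    have hcoeff := congrArg (coeff (Finsupp.single i 1 + d)) hL
    rw [coeff_sum, ← Finset.add_sum_erase _ _ (Finset.mem_univ i), coeff_X_mul, hLi_coeff,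
      coeff_zero] at hcoeff
    linear_combination hcoeff
  obtain ⟨j, hj, hcoeff⟩ :=
    Finset.exists_ne_zero_of_sum_ne_zero (hrest ▸ neg_ne_zero.2 one_ne_zero)
  have hji : j ≠ i := Finset.ne_of_mem_erase hj
  have hdj : d j ≠ 0 := by
    by_contra hdj
    refine hcoeff ?_
    rw [coeff_X_mul', if_neg]
    simp [hdj, hji.symm]
  obtain ⟨s, rfl⟩ : ∃ s, d = Finsupp.single j 1 + s :=
    le_iff_exists_add.1 (Finsupp.single_le_iff.2 (Nat.one_le_iff_ne_zero.2 hdj))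
  rw [add_left_comm, coeff_X_mul] at hcoeff
  refine ⟨j, hji, monomial s 1, by simp only [X, monomial_mul, one_mul], ?_⟩
  simpa only [X, monomial_mul, one_mul] using
    hI.monomial_mem_of_mem (hLv j hji) (mem_support_iff.2 hcoeff)

lemma IsMonomialIdeal.exists_eq_X_mul_of_koszulBd_eq (hI : IsMonomialIdeal I)
    {d : Fin n →₀ ℕ} (hnz : monomial d (1 : k) ∉ I) {i : Fin n}
    (w : Finset (Fin n) → MvPolynomial (Fin n) k ⧸ I)
    (hw : koszulBd (fun j => Ideal.Quotient.mk I (X j)) w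
      = fun τ => if τ = {i} then Ideal.Quotient.mk I (monomial d 1) else 0) :
    ∃ j ≠ i, ∃ g, monomial d (1 : k) = X j * g ∧ X i * g ∈ I := by
  obtain ⟨W, rfl⟩ : ∃ W : Finset (Fin n) → MvPolynomial (Fin n) k,
      (fun τ => Ideal.Quotient.mk I (W τ)) = w :=
    ⟨_, funext fun τ => Function.surjInv_eq Ideal.Quotient.mk_surjective (w τ)⟩
  have hmk : ∀ σ, Ideal.Quotient.mk I (koszulBd X W σ)
      = if σ = {i} then Ideal.Quotient.mk I (monomial d 1) else 0 :=
    fun σ => (map_koszulBd X W _ σ).trans (congrFun hw σ)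
  refine hI.exists_eq_X_mul_of_sum_X_mul_eq_zero hnz (L := fun v => koszulBd X W {v}) ?_ ?_
    fun v hv => ?_
  · rw [← koszulBd_empty, koszulBd_koszulBd_empty]
  · exact Ideal.Quotient.eq.1 (by simpa using hmk {i})
  · exact Ideal.Quotient.eq_zero_iff_mem.1 (by simpa [hv] using hmk {v})

end MonomialIdeal

theorem stmt7_general {k : Type*} [Field k] {n : ℕ}
    (I : Ideal (MvPolynomial (Fin n) k)) (hI : IsMonomialIdeal I)
    (d : Fin n →₀ ℕ) (u : MvPolynomial (Fin n) k) (hu : u = monomial d (1 : k))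
    (i : Fin n) (hnz : u ∉ I) :
    (∃ w : Finset (Fin n) → (MvPolynomial (Fin n) k ⧸ I),
        koszulBd (fun j => Ideal.Quotient.mk I (X j)) w
          = fun τ => if τ = ({i} : Finset (Fin n)) then Ideal.Quotient.mk I u else 0)
      ↔ u ∈ I + Ideal.span {f | ∃ j : Fin n, j ≠ i ∧ f = X j} *
            Submodule.colon I (Ideal.span {(X i : MvPolynomial (Fin n) k)}) := by
  subst hu
  refine ⟨fun ⟨w, hw⟩ => ?_, fun h => ?_⟩
  · obtain ⟨j, hji, g, hdg, hg⟩ := hI.exists_eq_X_mul_of_koszulBd_eq hnz w hw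
    rw [hdg]
    exact Submodule.mem_sup_right (Ideal.mul_mem_mul (Ideal.subset_span ⟨j, hji, rfl⟩)
      (Ideal.mem_colon_span_singleton.2 (mul_comm (X i) g ▸ hg)))
  · obtain ⟨j, hji, g, hdg, hg⟩ := hI.exists_eq_X_mul_of_mem_sup_span_X_mul_colon hnz h
    obtain ⟨w, hw⟩ := exists_koszulBd_eq_of_mul_eq_zero (fun l => Ideal.Quotient.mk I (X l))
      hji.symm (c := Ideal.Quotient.mk I g) (by rw [← map_mul, Ideal.Quotient.eq_zero_iff_mem.2 hg])
    exact ⟨w, by rw [hw, hdg, map_mul]⟩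

/-- if `ū e_i` is a monomial cycle in Koszul homological degree 1
(`x_i u ∈ I`, `u ∉ I`), then `[ū e_i] = 0` in `H₁(K^{S/I})` iff
`u ∈ I + (x_j : j ≠ i)·(I : x_i)`. -/
theorem stmt7 {k : Type*} [Field k] {n : ℕ}
    (I : Ideal (MvPolynomial (Fin n) k)) (hI : IsMonomialIdeal I)
    (d : Fin n →₀ ℕ) (u : MvPolynomial (Fin n) k) (hu : u = monomial d (1 : k))
    (i : Fin n) (hcyc : X i * u ∈ I) (hnz : u ∉ I) :
    (∃ w : Finset (Fin n) → (MvPolynomial (Fin n) k ⧸ I),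
        koszulBd (fun j => Ideal.Quotient.mk I (X j)) w
          = fun τ => if τ = ({i} : Finset (Fin n)) then Ideal.Quotient.mk I u else 0)
      ↔ u ∈ I + Ideal.span {f | ∃ j : Fin n, j ≠ i ∧ f = X j} *
            Submodule.colon I (Ideal.span {(X i : MvPolynomial (Fin n) k)}) :=
  stmt7_general I hI d u hu i hnz
end

section
/- Let J = (x_1x_3, x_1x_4, x_2x_3, x_2x_4) ⊆ S = k[x_1,x_2,x_3,x_4] and R = S/J. The element z = x̄_1 e_2∧e_3∧e_4 − x̄_2 e_1∧e_3∧e_4 is a cycle in the Koszul complex K^R which is not a boundary; moreover its homology class cannot be represented by any monomial cycle. -/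
/-!
In degree 3 of `K^R`, a boundary `∂w` only sees the top coefficient `a = w(e₁∧e₂∧e₃∧e₄)`:
its coefficient at the face omitting `e_j` is `±x̄_j a`. A chain that agrees with `z` at all
faces but one would therefore give `a ∈ R` with `x̄_i a = x̄_i` and `x̄_l a = 0` for some
`i ∈ {1, 2}` and `l ∈ {3, 4}`. Restricting to a coordinate axis, `x_m ↦ t` and every other
variable `↦ 0`, kills `J` because `J` is generated by products of distinct variables; on the
`x_i`-axis the image of `a` is `1 + t(…)`, on the `x_l`-axis it is `0`, yet both have the
constant term of `a`.
-/

open MvPolynomial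

/-- The cycle `z = x̄₁ e₂∧e₃∧e₄ − x̄₂ e₁∧e₃∧e₄` (0-indexed: coefficient `x̄₀` at
`{1,2,3}` and `−x̄₁` at `{0,2,3}`) in the Koszul complex of `S/J`. -/
noncomputable def zCycle (k : Type*) [Field k] (J : Ideal (MvPolynomial (Fin 4) k)) :
    Finset (Fin 4) → (MvPolynomial (Fin 4) k ⧸ J) :=
  fun τ => if τ = ({1, 2, 3} : Finset (Fin 4)) then Ideal.Quotient.mk J (X 0)
    else if τ = ({0, 2, 3} : Finset (Fin 4)) then - Ideal.Quotient.mk J (X 1) else 0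

open Finset

section EvalAxis

variable {σ k : Type*} [CommRing k] [DecidableEq σ]

noncomputable def evalAxis (l : σ) : MvPolynomial σ k →ₐ[k] Polynomial k :=
  aeval (Pi.single l Polynomial.X)

theorem evalAxis_X_self (l : σ) : evalAxis l (X l : MvPolynomial σ k) = Polynomial.X := by
  simp [evalAxis]

theorem evalAxis_X_mul_X_of_ne (l : σ) {p q : σ} (hpq : p ≠ q) :
    evalAxis l (X p * X q : MvPolynomial σ k) = 0 := by
  rcases eq_or_ne p l with rfl | hp
  · simp [evalAxis, hpq.symm]
  · simp [evalAxis, Pi.single_apply, hp]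

theorem coeff_zero_evalAxis (l : σ) (f : MvPolynomial σ k) :
    (evalAxis l f).coeff 0 = constantCoeff f := by
  induction f using MvPolynomial.induction_on with
  | C c => simp [evalAxis]
  | add f g hf hg => simp [hf, hg]
  | mul_X f m hf =>
    rcases eq_or_ne m l with rfl | hm
    · simp [evalAxis, Polynomial.coeff_zero_eq_eval_zero]
    · simp [evalAxis, hm]

theorem span_X_mul_X_le_ker_evalAxis (l : σ) :
    Ideal.span {f : MvPolynomial σ k | ∃ p q, p ≠ q ∧ f = X p * X q} ≤
      RingHom.ker (evalAxis l) := by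
  rw [Ideal.span_le]
  rintro _ ⟨p, q, hpq, rfl⟩
  exact evalAxis_X_mul_X_of_ne l hpq

end EvalAxis

theorem mk_X_mul_ne_zero_of_mk_X_mul_eq_self {σ k : Type*} [CommRing k] [Nontrivial k]
    {J : Ideal (MvPolynomial σ k)}
    (hJ : J ≤ Ideal.span {f | ∃ p q, p ≠ q ∧ f = X p * X q}) {i l : σ}
    {a : MvPolynomial σ k ⧸ J} (hi : Ideal.Quotient.mk J (X i) * a = Ideal.Quotient.mk J (X i)) :
    Ideal.Quotient.mk J (X l) * a ≠ 0 := by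
  classical
  obtain ⟨f, rfl⟩ := Ideal.Quotient.mk_surjective a
  intro hl
  rw [← map_mul, Ideal.Quotient.eq] at hi
  rw [← map_mul, Ideal.Quotient.eq_zero_iff_mem] at hl
  have hi' := span_X_mul_X_le_ker_evalAxis i (hJ hi)
  have hl' := span_X_mul_X_le_ker_evalAxis l (hJ hl)
  rw [RingHom.mem_ker, map_sub, map_mul, evalAxis_X_self, sub_eq_zero] at hi'
  rw [RingHom.mem_ker, map_mul, evalAxis_X_self] at hl'
  have h1 : constantCoeff f = 1 := by
    rw [← coeff_zero_evalAxis i, ← Polynomial.coeff_X_mul, hi', Polynomial.coeff_X_one]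
  have h0 : constantCoeff f = 0 := by
    rw [← coeff_zero_evalAxis l, ← Polynomial.coeff_X_mul, hl', Polynomial.coeff_zero]
  exact one_ne_zero (h1.symm.trans h0)

theorem isUnit_koszulSgn {n : ℕ} (τ : Finset (Fin n)) (j : Fin n) : IsUnit (koszulSgn τ j) :=
  isUnit_neg_one.pow _

theorem koszulBd_erase_univ {n : ℕ} {R : Type*} [CommRing R] (x : Fin n → R)
    (w : Finset (Fin n) → R) (j : Fin n) :
    koszulBd x w (univ.erase j) = koszulSgn univ j • (x j * w univ) := by
  rw [koszulBd, compl_erase, compl_univ, insert_empty, sum_singleton,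
    insert_erase (mem_univ j)]

section CrossIdeal

variable {k : Type*} [Field k] {J : Ideal (MvPolynomial (Fin 4) k)}

theorem le_span_X_mul_X_of_eq_span
    (hJ : J = Ideal.span {X 0 * X 2, X 0 * X 3, X 1 * X 2, X 1 * X 3}) :
    J ≤ Ideal.span {f | ∃ p q, p ≠ q ∧ f = X p * X q} := by
  rw [hJ]
  refine Ideal.span_mono ?_
  rintro _ (rfl | rfl | rfl | rfl)
  exacts [⟨0, 2, by decide, rfl⟩, ⟨0, 3, by decide, rfl⟩, ⟨1, 2, by decide, rfl⟩,
    ⟨1, 3, by decide, rfl⟩]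

theorem mk_X_mul_mk_X_eq_zero (hJ : J = Ideal.span {X 0 * X 2, X 0 * X 3, X 1 * X 2, X 1 * X 3})
    {p q : Fin 4} (hp : (p : ℕ) < 2) (hq : 2 ≤ (q : ℕ)) :
    Ideal.Quotient.mk J (X q) * Ideal.Quotient.mk J (X p) = 0 := by
  rw [← map_mul, Ideal.Quotient.eq_zero_iff_mem, hJ]
  apply Ideal.subset_span
  fin_cases p <;> fin_cases q <;> simp_all [mul_comm]

theorem zCycle_erase_univ (j : Fin 4) :
    zCycle k J (univ.erase j) =
      koszulSgn univ j • if (j : ℕ) < 2 then Ideal.Quotient.mk J (X j) else 0 := by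
  fin_cases j <;> simp +decide [zCycle, koszulSgn]

theorem mk_X_mul_zCycle_eq_zero (hJ : J = Ideal.span {X 0 * X 2, X 0 * X 3, X 1 * X 2, X 1 * X 3})
    {j : Fin 4} {τ : Finset (Fin 4)} (hj : j ∈ τ) (h123 : τ = {1, 2, 3} → j ≠ 1)
    (h023 : τ = {0, 2, 3} → j ≠ 0) :
    Ideal.Quotient.mk J (X j) * zCycle k J τ = 0 := by
  unfold zCycle
  split_ifs with h h'
  · subst h
    have : 2 ≤ (j : ℕ) := by fin_cases j <;> simp_all
    exact mk_X_mul_mk_X_eq_zero hJ (p := 0) (by decide) this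
  · subst h'
    have : 2 ≤ (j : ℕ) := by fin_cases j <;> simp_all
    linear_combination -mk_X_mul_mk_X_eq_zero hJ (p := 1) (by decide) this
  · exact mul_zero _

/-- The only face where two terms survive modulo `J` is `e₃ ∧ e₄`, and they cancel there. -/
theorem koszulBd_zCycle (hJ : J = Ideal.span {X 0 * X 2, X 0 * X 3, X 1 * X 2, X 1 * X 3}) :
    koszulBd (fun i => Ideal.Quotient.mk J (X i)) (zCycle k J) = 0 := by
  funext σ
  by_cases hσ : σ = {2, 3}
  · subst hσ
    rw [koszulBd, show ({2, 3}ᶜ : Finset (Fin 4)) = {0, 1} by decide, sum_pair (by decide)]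
    simp +decide [zCycle, koszulSgn]
    ring
  · refine sum_eq_zero fun j hj => ?_
    rw [mem_compl] at hj
    refine smul_eq_zero_of_right _ (mk_X_mul_zCycle_eq_zero hJ (mem_insert_self j σ) ?_ ?_) <;>
    · rintro h rfl
      exact hσ (by rw [← erase_insert hj, h]; decide)

theorem zCycle_sub_single_not_boundary
    (hJ : J = Ideal.span {X 0 * X 2, X 0 * X 3, X 1 * X 2, X 1 * X 3})
    (σ : Finset (Fin 4)) (u : MvPolynomial (Fin 4) k ⧸ J) :
    ¬ ∃ w, koszulBd (fun i => Ideal.Quotient.mk J (X i)) w =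
      fun τ => zCycle k J τ - if τ = σ then u else 0 := by
  rintro ⟨w, hw⟩
  have face : ∀ j : Fin 4, univ.erase j ≠ σ →
      Ideal.Quotient.mk J (X j) * w univ =
        if (j : ℕ) < 2 then Ideal.Quotient.mk J (X j) else 0 := by
    intro j hj
    have := congrFun hw (univ.erase j)
    rw [koszulBd_erase_univ, zCycle_erase_univ, if_neg hj, sub_zero] at this
    exact (isUnit_koszulSgn _ _).smul_left_cancel.mp this
  -- `σ` is at most one of the faces, so it misses one of `x̄₀, x̄₁` and one of `x̄₂, x̄₃`
  have avoid : ∀ a b : Fin 4, a ≠ b → ∃ j ∈ ({a, b} : Finset (Fin 4)), univ.erase j ≠ σ := by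
    intro a b hab
    by_cases ha : univ.erase a = σ
    · refine ⟨b, by simp, fun hb => hab ?_⟩
      simpa using congrArg (fun s => univᶜ ∪ sᶜ) (ha.trans hb.symm)
    · exact ⟨a, by simp, ha⟩
  obtain ⟨i, hi, hiσ⟩ := avoid 0 1 (by decide)
  obtain ⟨l, hl, hlσ⟩ := avoid 2 3 (by decide)
  have hi2 : (i : ℕ) < 2 := by fin_cases i <;> simp_all
  have hl2 : ¬ (l : ℕ) < 2 := by fin_cases l <;> simp_all
  exact mk_X_mul_ne_zero_of_mk_X_mul_eq_self (le_span_X_mul_X_of_eq_span hJ)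
    (by simpa [hi2] using face i hiσ) (by simpa [hl2] using face l hlσ)

end CrossIdeal

/-- for `J = (x₁x₃, x₁x₄, x₂x₃, x₂x₄)`, the element
`z = x̄₁ e₂∧e₃∧e₄ − x̄₂ e₁∧e₃∧e₄` is a cycle which is not a boundary, and its
homology class cannot be represented by any monomial cycle `ū e_σ`. -/
theorem stmt9 (k : Type*) [Field k]
    (J : Ideal (MvPolynomial (Fin 4) k))
    (hJ : J = Ideal.span {X 0 * X 2, X 0 * X 3, X 1 * X 2, X 1 * X 3}) :
    (koszulBd (fun i => Ideal.Quotient.mk J (X i)) (zCycle k J) = 0)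
    ∧ (¬ ∃ w : Finset (Fin 4) → (MvPolynomial (Fin 4) k ⧸ J),
        koszulBd (fun i => Ideal.Quotient.mk J (X i)) w = zCycle k J)
    ∧ (∀ (d : Fin 4 →₀ ℕ) (σ : Finset (Fin 4)),
        koszulBd (fun i => Ideal.Quotient.mk J (X i))
          (fun τ => if τ = σ then Ideal.Quotient.mk J (monomial d (1 : k)) else 0) = 0 →
        ¬ ∃ w : Finset (Fin 4) → (MvPolynomial (Fin 4) k ⧸ J),
          koszulBd (fun i => Ideal.Quotient.mk J (X i)) w
            = fun τ => zCycle k J τ -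
                (if τ = σ then Ideal.Quotient.mk J (monomial d (1 : k)) else 0)) := by
  refine ⟨koszulBd_zCycle hJ, fun ⟨w, hw⟩ => zCycle_sub_single_not_boundary hJ ∅ 0 ⟨w, ?_⟩,
    fun d σ _ => zCycle_sub_single_not_boundary hJ σ _⟩
  simpa using hw
end
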